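/- arXiv:1703.09563 — 7 statements merged into one kernel-verified Lean document; each statement's English description precedes it below -/
import Mathlib

section
/- Let f : ℝⁿ × ℝᵐ × ℝᵉ → ℝⁿ, let u : ℕ → ℝᵐ and w : ℕ → ℝᵉ, and let x : ℕ → ℝⁿ satisfy x(k+1) = f(x(k), u(k), w(k)) for all k ∈ ℕ. Let φ be an STL formula with bound H. Suppose that for every t ∈ ℕ there exists a signal ξᵗ : ℕ → ℝⁿ with ξᵗ(0) = x(t), ξᵗ(k+1) = f(ξᵗ(k), u(t+k), w(t+k)) for all k < H, and (ξᵗ, 0) ⊨ φ. Then for every t ∈ ℕ, (x, t) ⊨ φ; that is, the infinite run x satisfies the unbounded formula G φ. -/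
inductive STL (X : Type) : Type where
  | atom : (X → ℝ) → STL X
  | not : STL X → STL X
  | and : STL X → STL X → STL X
  | ev : (a b : ℕ) → a ≤ b → STL X → STL X
  | untl : (a b : ℕ) → a ≤ b → STL X → STL X → STL X

def Sat {X : Type} (ξ : ℕ → X) : STL X → ℕ → Prop
  | .atom μ, k => μ (ξ k) > 0
  | .not φ, k => ¬ Sat ξ φ k
  | .and φ ψ, k => Sat ξ φ k ∧ Sat ξ ψ k
  | .ev a b _ φ, k => ∃ k', k + a ≤ k' ∧ k' ≤ k + b ∧ Sat ξ φ k'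
  | .untl a b _ φ ψ, k => ∃ k', k + a ≤ k' ∧ k' ≤ k + b ∧ Sat ξ ψ k' ∧
      ∀ k'', k ≤ k'' → k'' ≤ k' → Sat ξ φ k''

noncomputable def Rob {X : Type} (ξ : ℕ → X) : STL X → ℕ → ℝ
  | .atom μ, k => μ (ξ k)
  | .not φ, k => - Rob ξ φ k
  | .and φ ψ, k => min (Rob ξ φ k) (Rob ξ ψ k)
  | .ev a b h φ, k => (Finset.Icc (k + a) (k + b)).sup'
      (Finset.nonempty_Icc.mpr (by omega)) (fun k' => Rob ξ φ k')
  | .untl a b h φ ψ, k => (Finset.Icc (k + a) (k + b)).sup'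
      (Finset.nonempty_Icc.mpr (by omega)) (fun k' =>
        min (Rob ξ ψ k')
          ((insert k (Finset.Icc k k')).inf' (Finset.insert_nonempty _ _)
            (fun k'' => Rob ξ φ k'')))

def bound {X : Type} : STL X → ℕ
  | .atom _ => 0
  | .not φ => bound φ
  | .and φ ψ => max (bound φ) (bound ψ)
  | .ev _ b _ φ => b + bound φ
  | .untl _ b _ φ ψ => b + max (bound φ) (bound ψ)

lemma Sat_congr {X : Type} (φ : STL X) : ∀ (ξ η : ℕ → X) (k : ℕ),
    (∀ j, k ≤ j → j ≤ k + bound φ → ξ j = η j) → (Sat ξ φ k ↔ Sat η φ k) := by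
  induction φ with
  | atom μ =>
    intro ξ η k h
    simp only [Sat]
    rw [h k le_rfl (by simp [bound])]
  | not φ ih =>
    intro ξ η k h
    simp only [Sat]
    rw [ih ξ η k h]
  | and φ ψ ihφ ihψ =>
    intro ξ η k h
    simp only [Sat]
    rw [ihφ ξ η k (fun j h1 h2 => h j h1 (by simp [bound] at *; omega)),
        ihψ ξ η k (fun j h1 h2 => h j h1 (by simp [bound] at *; omega))]
  | ev a b hab φ ih =>
    intro ξ η k h
    simp only [Sat]
    constructor <;> rintro ⟨k', h1, h2, h3⟩ <;> refine ⟨k', h1, h2, ?_⟩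
    · rw [← ih ξ η k' (fun j hj1 hj2 => h j (by omega) (by simp [bound] at *; omega))]
      exact h3
    · rw [ih ξ η k' (fun j hj1 hj2 => h j (by omega) (by simp [bound] at *; omega))]
      exact h3
  | untl a b hab φ ψ ihφ ihψ =>
    intro ξ η k h
    simp only [Sat]
    constructor <;> rintro ⟨k', h1, h2, h3, h4⟩ <;> refine ⟨k', h1, h2, ?_, ?_⟩
    · rw [← ihψ ξ η k' (fun j hj1 hj2 => h j (by omega) (by simp [bound] at *; omega))]
      exact h3
    · intro k'' hk1 hk2
      rw [← ihφ ξ η k'' (fun j hj1 hj2 => h j (by omega) (by simp [bound] at *; omega))]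
      exact h4 k'' hk1 hk2
    · rw [ihψ ξ η k' (fun j hj1 hj2 => h j (by omega) (by simp [bound] at *; omega))]
      exact h3
    · intro k'' hk1 hk2
      rw [ihφ ξ η k'' (fun j hj1 hj2 => h j (by omega) (by simp [bound] at *; omega))]
      exact h4 k'' hk1 hk2

lemma Sat_shift {X : Type} (φ : STL X) (ξ : ℕ → X) (t : ℕ) :
    ∀ k, Sat (fun j => ξ (t + j)) φ k ↔ Sat ξ φ (t + k) := by
  induction φ with
  | atom μ => intro k; simp [Sat]
  | not φ ih => intro k; simp [Sat, ih]
  | and φ ψ ihφ ihψ => intro k; simp [Sat, ihφ, ihψ]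
  | ev a b hab φ ih =>
    intro k
    simp only [Sat]
    constructor
    · rintro ⟨k', h1, h2, h3⟩
      exact ⟨t + k', by omega, by omega, (ih k').mp h3⟩
    · rintro ⟨k', h1, h2, h3⟩
      refine ⟨k' - t, by omega, by omega, (ih (k' - t)).mpr ?_⟩
      have : t + (k' - t) = k' := by omega
      rw [this]; exact h3
  | untl a b hab φ ψ ihφ ihψ =>
    intro k
    simp only [Sat]
    constructor
    · rintro ⟨k', h1, h2, h3, h4⟩
      refine ⟨t + k', by omega, by omega, (ihψ k').mp h3, ?_⟩
      intro k'' hk1 hk2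
      have := (ihφ (k'' - t)).mp (h4 (k'' - t) (by omega) (by omega))
      rwa [show t + (k'' - t) = k'' by omega] at this
    · rintro ⟨k', h1, h2, h3, h4⟩
      refine ⟨k' - t, by omega, by omega, (ihψ (k' - t)).mpr (by rwa [show t + (k' - t) = k' by omega]), ?_⟩
      intro k'' hk1 hk2
      exact (ihφ k'').mpr (h4 (t + k'') (by omega) (by omega))

/-- if at every time t some finite continuation of the run (following the
same dynamics and the same inputs, over the bound H of φ) satisfies φ at time 0,
then the infinite run satisfies φ at every time, i.e. it satisfies G φ. -/
theorem mpc_unbounded_always {n m e : ℕ}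
    (f : (Fin n → ℝ) → (Fin m → ℝ) → (Fin e → ℝ) → (Fin n → ℝ))
    (u : ℕ → Fin m → ℝ) (w : ℕ → Fin e → ℝ) (x : ℕ → Fin n → ℝ)
    (hx : ∀ k : ℕ, x (k + 1) = f (x k) (u k) (w k))
    (φ : STL (Fin n → ℝ)) (H : ℕ) (hH : bound φ = H)
    (hsat : ∀ t : ℕ, ∃ ξ : ℕ → Fin n → ℝ,
      ξ 0 = x t ∧
      (∀ k : ℕ, k < H → ξ (k + 1) = f (ξ k) (u (t + k)) (w (t + k))) ∧
      Sat ξ φ 0) :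
    ∀ t : ℕ, Sat x φ t := by
  intro t
  obtain ⟨ξ, hξ0, hξdyn, hξsat⟩ := hsat t
  have hagree : ∀ j, j ≤ H → ξ j = x (t + j) := by
    intro j hj
    induction j with
    | zero => simpa using hξ0
    | succ i ih =>
      rw [hξdyn i (by omega), ih (by omega), show t + (i + 1) = (t + i) + 1 by ring, hx]
  have h1 : Sat (fun j => x (t + j)) φ 0 := by
    rw [← Sat_congr φ ξ (fun j => x (t + j)) 0 (fun j h1 h2 => hagree j (by omega))]
    exact hξsat
  have := (Sat_shift φ x t 0).mp h1
  simpa using this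
end

section
/- Soundness of the quantitative semantics: for every STL formula φ, every signal ξ : ℕ → ℝⁿ, and every time index k ∈ ℕ, if ρ^φ(ξ, k) > 0 then (ξ, k) ⊨ φ. -/
lemma rob_sound {X : Type} (ξ : ℕ → X) (φ : STL X) (k : ℕ) :
    (Rob ξ φ k > 0 → Sat ξ φ k) ∧ (Sat ξ φ k → Rob ξ φ k ≥ 0) := by
  induction φ generalizing k with
  | atom μ =>
    constructor
    · intro h; exact h
    · intro h; exact le_of_lt h
  | not φ ih =>
    constructor
    · intro h hs
      have := (ih k).2 hs
      simp only [Rob] at h; linarith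
    · intro hs
      simp only [Sat] at hs
      simp only [Rob]
      by_contra hc
      push_neg at hc
      exact hs ((ih k).1 (by linarith))
  | and φ ψ ihφ ihψ =>
    constructor
    · intro h
      simp only [Rob, lt_min_iff] at h
      exact ⟨(ihφ k).1 h.1, (ihψ k).1 h.2⟩
    · intro hs
      simp only [Rob, le_min_iff]
      exact ⟨(ihφ k).2 hs.1, (ihψ k).2 hs.2⟩
  | ev a b hab φ ih =>
    constructor
    · intro h
      simp only [Rob] at h
      rw [gt_iff_lt, Finset.lt_sup'_iff] at h
      obtain ⟨k', hk', hpos⟩ := h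
      rw [Finset.mem_Icc] at hk'
      exact ⟨k', hk'.1, hk'.2, (ih k').1 hpos⟩
    · intro hs
      obtain ⟨k', h1, h2, hsat⟩ := hs
      simp only [Rob]
      calc (0:ℝ) ≤ Rob ξ φ k' := (ih k').2 hsat
        _ ≤ _ := Finset.le_sup' _ (Finset.mem_Icc.mpr ⟨h1, h2⟩)
  | untl a b hab φ ψ ihφ ihψ =>
    constructor
    · intro h
      simp only [Rob] at h
      rw [gt_iff_lt, Finset.lt_sup'_iff] at h
      obtain ⟨k', hk', hpos⟩ := h
      rw [Finset.mem_Icc] at hk'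
      rw [lt_min_iff] at hpos
      refine ⟨k', hk'.1, hk'.2, (ihψ k').1 hpos.1, ?_⟩
      intro k'' h1 h2
      apply (ihφ k'').1
      calc (0:ℝ) < _ := hpos.2
        _ ≤ Rob ξ φ k'' := Finset.inf'_le _
          (Finset.mem_insert_of_mem (Finset.mem_Icc.mpr ⟨h1, h2⟩))
    · intro hs
      obtain ⟨k', h1, h2, hψ, hφ⟩ := hs
      simp only [Rob]
      refine le_trans ?_ (Finset.le_sup' _ (Finset.mem_Icc.mpr ⟨h1, h2⟩))
      rw [le_min_iff]
      refine ⟨(ihψ k').2 hψ, ?_⟩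
      apply Finset.le_inf'
      intro k'' hk''
      rcases Finset.mem_insert.mp hk'' with h | h
      · subst h
        exact (ihφ k'').2 (hφ k'' le_rfl (by omega))
      · rw [Finset.mem_Icc] at h
        exact (ihφ k'').2 (hφ k'' h.1 h.2)

/-- soundness of the quantitative semantics: positive robustness
implies satisfaction. -/
theorem rob_pos_implies_sat {n : ℕ} (φ : STL (Fin n → ℝ))
    (ξ : ℕ → Fin n → ℝ) (k : ℕ) (h : Rob ξ φ k > 0) :
    Sat ξ φ k := by
  exact (rob_sound ξ φ k).1 h
end

section
/- Decomposition of the bounded until into the unbounded until: for every signal ξ : ℕ → ℝⁿ, every time index k ∈ ℕ, all a ≤ b in ℕ, and all STL formulas φ₁, φ₂: (ξ, k) ⊨ φ₁ U_[a,b] φ₂ if and only if [ (ξ, k') ⊨ φ₁ for all k' with k ≤ k' ≤ k+a ] and [ there exists k' with k+a ≤ k' ≤ k+b such that (ξ, k') ⊨ φ₂ ] and [ (ξ, k+a) ⊨ φ₁ U φ₂ ], where the unbounded until is defined by (ξ, t) ⊨ φ₁ U φ₂ iff there exists t' ≥ t with (ξ, t') ⊨ φ₂ and (ξ, t'') ⊨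 φ₁ for all t'' with t ≤ t'' ≤ t'. Equivalently, φ₁ U_[a,b] φ₂ = G_[0,a] φ₁ ∧ F_[a,b] φ₂ ∧ F_[a,a](φ₁ U φ₂). -/
/-- Unbounded until: (ξ, t) ⊨ φ₁ U φ₂ iff there exists t' ≥ t with (ξ, t') ⊨ φ₂ and
(ξ, t'') ⊨ φ₁ for all t ≤ t'' ≤ t'. -/
def SatUnbUntil {X : Type} (ξ : ℕ → X) (φ₁ φ₂ : STL X) (t : ℕ) : Prop :=
  ∃ t' : ℕ, t ≤ t' ∧ Sat ξ φ₂ t' ∧ ∀ t'' : ℕ, t ≤ t'' → t'' ≤ t' → Sat ξ φ₁ t''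

/-- decomposition of the bounded until into the unbounded until:
φ₁ U_[a,b] φ₂ = G_[0,a] φ₁ ∧ F_[a,b] φ₂ ∧ F_[a,a] (φ₁ U φ₂). -/
theorem bounded_until_decomposition {n : ℕ} (ξ : ℕ → Fin n → ℝ) (k : ℕ)
    (a b : ℕ) (h : a ≤ b) (φ₁ φ₂ : STL (Fin n → ℝ)) :
    Sat ξ (.untl a b h φ₁ φ₂) k ↔
      ((∀ k' : ℕ, k ≤ k' → k' ≤ k + a → Sat ξ φ₁ k') ∧
       (∃ k' : ℕ, k + a ≤ k' ∧ k' ≤ k + b ∧ Sat ξ φ₂ k') ∧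
       SatUnbUntil ξ φ₁ φ₂ (k + a)) := by
  constructor
  · rintro ⟨k', h1, h2, h3, h4⟩
    exact ⟨fun j hj hj' => h4 j hj (by omega),
      ⟨k', h1, h2, h3⟩,
      ⟨k', h1, h3, fun j hj hj' => h4 j (by omega) hj'⟩⟩
  · rintro ⟨hG, ⟨m, hm1, hm2, hm3⟩, ⟨t, ht1, ht2, ht3⟩⟩
    by_cases hc : t ≤ k + b
    · exact ⟨t, ht1, hc, ht2, fun j hj hj' => by
        rcases le_or_gt j (k+a) with hcase | hcase
        · exact hG j hj hcase
        · exact ht3 j (by omega) hj'⟩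
    · exact ⟨m, hm1, hm2, hm3, fun j hj hj' => by
        rcases le_or_gt j (k+a) with hcase | hcase
        · exact hG j hj hcase
        · exact ht3 j (by omega) (by omega)⟩
end

section
/- Correctness of the big-M predicate encoding: let r, ε, M ∈ ℝ with 0 < ε and M ≥ |r| + ε. (i) If z ∈ {0, 1} satisfies the constraints r ≤ M·z − ε and −r ≤ M·(1 − z) − ε, then z = 1 implies r ≥ ε and z = 0 implies r ≤ −ε. (ii) Conversely, if r ≥ ε then z = 1 satisfies both constraints, and if r ≤ −ε then z = 0 satisfies both constraints. -/
/-- correctness of the big-M predicate encoding. -/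
theorem bigM_predicate_encoding_correct (r ε M : ℝ) (hε : 0 < ε) (hM : M ≥ |r| + ε) :
    (∀ z : ℝ, (z = 0 ∨ z = 1) →
      r ≤ M * z - ε → -r ≤ M * (1 - z) - ε →
      ((z = 1 → r ≥ ε) ∧ (z = 0 → r ≤ -ε))) ∧
    ((r ≥ ε → (r ≤ M * 1 - ε ∧ -r ≤ M * (1 - 1) - ε)) ∧
     (r ≤ -ε → (r ≤ M * 0 - ε ∧ -r ≤ M * (1 - 0) - ε))) := by
  have h1 := le_abs_self r
  have h2 := neg_abs_le r
  constructor
  · rintro z (rfl | rfl) hc1 hc2 <;> constructor <;> intro h <;> simp_all <;> linarith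
  · constructor <;> intro h <;> constructor <;> simp <;> linarith
end

section
/- Correctness of the robust min (conjunction) MILP encoding: let m ≥ 1, let r₁, …, r_m ∈ ℝ, let p₁, …, p_m ∈ {0, 1} with Σᵢ pᵢ = 1, let M ∈ ℝ, and let r ∈ ℝ satisfy, for all i = 1, …, m: r ≤ rᵢ and rᵢ − (1 − pᵢ)·M ≤ r ≤ rᵢ + M·(1 − pᵢ). Then r = min(r₁, …, r_m). Conversely, if M ≥ max(r₁, …, r_m) − min(r₁, …, r_m), then setting r = min(r₁, …, r_m), choosing j attaining the minimum, and setting p_j = 1 and pᵢ = 0 for i ≠ j satisfies all the constraints. -/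
/-- correctness of the robust min (conjunction) MILP encoding. -/
theorem robust_min_milp_encoding_correct {m : ℕ} (hm : 1 ≤ m)
    (rr : Fin m → ℝ) (M : ℝ) :
    (∀ (p : Fin m → ℝ) (r : ℝ),
        (∀ i, p i = 0 ∨ p i = 1) → (∑ i, p i) = 1 →
        (∀ i, r ≤ rr i) →
        (∀ i, rr i - (1 - p i) * M ≤ r ∧ r ≤ rr i + M * (1 - p i)) →
        r = Finset.univ.inf' ⟨⟨0, hm⟩, Finset.mem_univ _⟩ rr) ∧
    (M ≥ Finset.univ.sup' ⟨⟨0, hm⟩, Finset.mem_univ _⟩ rr -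
         Finset.univ.inf' ⟨⟨0, hm⟩, Finset.mem_univ _⟩ rr →
      ∃ j : Fin m, rr j = Finset.univ.inf' ⟨⟨0, hm⟩, Finset.mem_univ _⟩ rr ∧
        (let p : Fin m → ℝ := fun i => if i = j then 1 else 0
         let r : ℝ := Finset.univ.inf' ⟨⟨0, hm⟩, Finset.mem_univ _⟩ rr
         (∀ i, p i = 0 ∨ p i = 1) ∧ (∑ i, p i) = 1 ∧
         (∀ i, r ≤ rr i) ∧
         (∀ i, rr i - (1 - p i) * M ≤ r ∧ r ≤ rr i + M * (1 - p i)))) := by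
  have hne : (Finset.univ : Finset (Fin m)).Nonempty := ⟨⟨0, hm⟩, Finset.mem_univ _⟩
  constructor
  · intro p r hp hsum hle hbox
    -- find j with p j = 1
    have hj : ∃ j, p j = 1 := by
      by_contra h
      push_neg at h
      have : ∀ i, p i = 0 := fun i => (hp i).resolve_right (h i)
      simp [this] at hsum
    obtain ⟨j, hj⟩ := hj
    have h1 := (hbox j).1
    have h2 := (hbox j).2
    rw [hj] at h1 h2
    simp at h1 h2
    have hrj : r = rr j := le_antisymm h2 h1
    exact le_antisymm (Finset.le_inf' _ _ fun i _ => hle i)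
      (hrj ▸ Finset.inf'_le _ (Finset.mem_univ j))
  · intro hM
    obtain ⟨j, _, hj⟩ := Finset.exists_mem_eq_inf' hne rr
    refine ⟨j, hj.symm, ?_, ?_, ?_, ?_⟩
    · intro i; by_cases h : i = j <;> simp [h]
    · simp
    · intro i; exact Finset.inf'_le _ (Finset.mem_univ i)
    · intro i
      have hinf : Finset.univ.inf' hne rr ≤ rr i := Finset.inf'_le _ (Finset.mem_univ i)
      have hsup : rr i ≤ Finset.univ.sup' hne rr := Finset.le_sup' _ (Finset.mem_univ i)
      by_cases h : i = j
      · subst h; simp [← hj]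
      · simp only [if_neg h]
        constructor
        · nlinarith
        · nlinarith
end

section
/- Periodicity of STL satisfaction on eventually periodic signals: let ξ : ℕ → ℝⁿ be a signal, and suppose there exist j ∈ ℕ and p ≥ 1 such that ξ(k + p) = ξ(k) for all k ≥ j. Then for every STL formula φ and every k ≥ j: (ξ, k) ⊨ φ if and only if (ξ, k + p) ⊨ φ. -/
/-- on an eventually periodic signal (period p ≥ 1 from time j on),
STL satisfaction is periodic from time j on. -/
theorem sat_periodic_of_eventually_periodic {n : ℕ} (ξ : ℕ → Fin n → ℝ)
    (j p : ℕ) (hp : 1 ≤ p) (hper : ∀ k : ℕ, j ≤ k → ξ (k + p) = ξ k)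
    (φ : STL (Fin n → ℝ)) (k : ℕ) (hk : j ≤ k) :
    Sat ξ φ k ↔ Sat ξ φ (k + p) := by
  induction φ generalizing k with
  | atom μ => simp only [Sat]; rw [hper k hk]
  | not φ ih => simp only [Sat]; rw [ih k hk]
  | and φ ψ ihφ ihψ => simp only [Sat]; rw [ihφ k hk, ihψ k hk]
  | ev a b h φ ih =>
    simp only [Sat]
    constructor
    · rintro ⟨k', h1, h2, hs⟩
      exact ⟨k' + p, by omega, by omega, (ih k' (by omega)).mp hs⟩
    · rintro ⟨k', h1, h2, hs⟩
      refine ⟨k' - p, by omega, by omega, ?_⟩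
      have := (ih (k' - p) (by omega)).mpr
      rw [show k' - p + p = k' by omega] at this
      exact this hs
  | untl a b h φ ψ ihφ ihψ =>
    simp only [Sat]
    constructor
    · rintro ⟨k', h1, h2, hψ, hφ⟩
      refine ⟨k' + p, by omega, by omega, (ihψ k' (by omega)).mp hψ, ?_⟩
      intro k'' hl hr
      have hq := (ihφ (k'' - p) (by omega)).mp (hφ (k'' - p) (by omega) (by omega))
      rwa [show k'' - p + p = k'' by omega] at hq
    · rintro ⟨k', h1, h2, hψ, hφ⟩
      have hψ' := (ihψ (k' - p) (by omega)).mpr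
      rw [show k' - p + p = k' by omega] at hψ'
      refine ⟨k' - p, by omega, by omega, hψ' hψ, ?_⟩
      intro k'' hl hr
      exact (ihφ k'' (by omega)).mpr (hφ (k'' + p) (by omega) (by omega))
end

section
/- Lipschitz robustness of STL satisfaction: let L ≥ 0 and let φ be an STL formula all of whose atomic predicates μ are L-Lipschitz, i.e., |μ(x) − μ(y)| ≤ L·‖x − y‖ for all x, y ∈ ℝⁿ. Let ξ, ξ' : ℕ → ℝⁿ be signals with ‖ξ(k') − ξ'(k')‖ ≤ δ for all k' ∈ ℕ, where δ ≥ 0. Then for every time index k ∈ ℕ: |ρ^φ(ξ, k) − ρ^φ(ξ', k)| ≤ L·δ. In particular, if ρ^φ(ξ, k) > L·δ then (ξ', k) ⊨ φ. -/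
/-- All atomic predicates of the formula are L-Lipschitz (Euclidean norm on ℝⁿ). -/
def AtomsLipschitz {n : ℕ} (L : ℝ) : STL (EuclideanSpace ℝ (Fin n)) → Prop
  | .atom μ => ∀ x y : EuclideanSpace ℝ (Fin n), |μ x - μ y| ≤ L * ‖x - y‖
  | .not φ => AtomsLipschitz L φ
  | .and φ ψ => AtomsLipschitz L φ ∧ AtomsLipschitz L ψ
  | .ev _ _ _ φ => AtomsLipschitz L φ
  | .untl _ _ _ φ ψ => AtomsLipschitz L φ ∧ AtomsLipschitz L ψ


lemma sup'_abs_sub_le {s : Finset ℕ} (h : s.Nonempty) (f g : ℕ → ℝ) (c : ℝ)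
    (hc : ∀ i ∈ s, |f i - g i| ≤ c) : |s.sup' h f - s.sup' h g| ≤ c := by
  rw [abs_sub_le_iff]
  constructor
  · rw [sub_le_iff_le_add]
    apply Finset.sup'_le
    intro i hi
    have := (abs_sub_le_iff.mp (hc i hi)).1
    have := Finset.le_sup' g hi
    linarith
  · rw [sub_le_iff_le_add]
    apply Finset.sup'_le
    intro i hi
    have := (abs_sub_le_iff.mp (hc i hi)).2
    have := Finset.le_sup' f hi
    linarith

lemma inf'_abs_sub_le {s : Finset ℕ} (h : s.Nonempty) (f g : ℕ → ℝ) (c : ℝ)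
    (hc : ∀ i ∈ s, |f i - g i| ≤ c) : |s.inf' h f - s.inf' h g| ≤ c := by
  rw [abs_sub_le_iff]
  constructor
  · rw [sub_le_iff_le_add]
    obtain ⟨i, hi, hie⟩ := Finset.exists_mem_eq_inf' h g
    have := (abs_sub_le_iff.mp (hc i hi)).1
    have := Finset.inf'_le f hi
    rw [hie]; linarith
  · rw [sub_le_iff_le_add]
    obtain ⟨i, hi, hie⟩ := Finset.exists_mem_eq_inf' h f
    have := (abs_sub_le_iff.mp (hc i hi)).2
    have := Finset.inf'_le g hi
    rw [hie]; linarith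

lemma rob_sat {X : Type} (ξ : ℕ → X) (φ : STL X) :
    ∀ k, (Rob ξ φ k > 0 → Sat ξ φ k) ∧ (Rob ξ φ k < 0 → ¬ Sat ξ φ k) := by
  induction φ with
  | atom μ =>
    intro k
    refine ⟨fun h => h, fun h hs => ?_⟩
    simp only [Rob] at h
    simp only [Sat] at hs
    linarith
  | not φ ih =>
    intro k
    constructor
    · intro h
      simp only [Rob] at h
      exact (ih k).2 (by linarith)
    · intro h
      simp only [Rob] at h
      exact fun hn => hn ((ih k).1 (by linarith))
  | and φ ψ ihφ ihψ =>
    intro k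
    constructor
    · intro h
      simp only [Rob, lt_min_iff] at h
      exact ⟨(ihφ k).1 h.1, (ihψ k).1 h.2⟩
    · intro h
      simp only [Rob, min_lt_iff] at h
      rcases h with h | h
      · exact fun hs => (ihφ k).2 h hs.1
      · exact fun hs => (ihψ k).2 h hs.2
  | ev a b hab φ ih =>
    intro k
    constructor
    · intro h
      simp only [Rob, Finset.lt_sup'_iff, Finset.mem_Icc] at h
      obtain ⟨k', ⟨h1, h2⟩, h3⟩ := h
      exact ⟨k', h1, h2, (ih k').1 h3⟩
    · intro h
      simp only [Rob, Finset.sup'_lt_iff, Finset.mem_Icc] at h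
      rintro ⟨k', h1, h2, h3⟩
      exact (ih k').2 (h k' ⟨h1, h2⟩) h3
  | untl a b hab φ ψ ihφ ihψ =>
    intro k
    constructor
    · intro h
      simp only [Rob, Finset.lt_sup'_iff, Finset.mem_Icc, lt_min_iff,
        Finset.lt_inf'_iff] at h
      obtain ⟨k', ⟨h1, h2⟩, h3, h4⟩ := h
      refine ⟨k', h1, h2, (ihψ k').1 h3, ?_⟩
      intro k'' hk1 hk2
      exact (ihφ k'').1 (h4 k'' (by simp [Finset.mem_Icc]; omega))
    · intro h
      simp only [Rob, Finset.sup'_lt_iff, Finset.mem_Icc, min_lt_iff] at h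
      rintro ⟨k', h1, h2, h3, h4⟩
      rcases h k' ⟨h1, h2⟩ with hlt | hlt
      · exact (ihψ k').2 hlt h3
      · rw [Finset.inf'_lt_iff] at hlt
        obtain ⟨k'', hk'', hlt⟩ := hlt
        simp only [Finset.mem_insert, Finset.mem_Icc] at hk''
        have hr : k ≤ k'' ∧ k'' ≤ k' := by omega
        exact (ihφ k'').2 hlt (h4 k'' hr.1 hr.2)

lemma rob_lip {n : ℕ} (L : ℝ)
    (φ : STL (EuclideanSpace ℝ (Fin n))) (hφ : AtomsLipschitz L φ)
    (ξ ξ' : ℕ → EuclideanSpace ℝ (Fin n)) (δ : ℝ)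
    (hclose : ∀ k' : ℕ, ‖ξ k' - ξ' k'‖ ≤ δ) (hL : 0 ≤ L) :
    ∀ k : ℕ, |Rob ξ φ k - Rob ξ' φ k| ≤ L * δ := by
  induction φ with
  | atom μ =>
    intro k
    calc |μ (ξ k) - μ (ξ' k)| ≤ L * ‖ξ k - ξ' k‖ := hφ _ _
      _ ≤ L * δ := by have := hclose k; nlinarith
  | not φ ih =>
    intro k
    have := ih hφ k
    simp only [Rob]
    rw [show -Rob ξ φ k - -Rob ξ' φ k = -(Rob ξ φ k - Rob ξ' φ k) by ring, abs_neg]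
    exact this
  | and φ ψ ihφ ihψ =>
    intro k
    refine le_trans (abs_min_sub_min_le_max _ _ _ _) ?_
    exact max_le (ihφ hφ.1 k) (ihψ hφ.2 k)
  | ev a b hab φ ih =>
    intro k
    exact sup'_abs_sub_le _ _ _ _ (fun i _ => ih hφ i)
  | untl a b hab φ ψ ihφ ihψ =>
    intro k
    apply sup'_abs_sub_le
    intro i _
    refine le_trans (abs_min_sub_min_le_max _ _ _ _) ?_
    refine max_le (ihψ hφ.2 i) ?_
    exact inf'_abs_sub_le _ _ _ _ (fun j _ => ihφ hφ.1 j)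

/-- Lipschitz robustness of STL satisfaction: uniformly δ-close signals
have robustness values within L·δ of each other; in particular robustness above L·δ
on one signal forces satisfaction on the other. -/
theorem rob_lipschitz {n : ℕ} (L : ℝ) (hL : 0 ≤ L)
    (φ : STL (EuclideanSpace ℝ (Fin n))) (hφ : AtomsLipschitz L φ)
    (ξ ξ' : ℕ → EuclideanSpace ℝ (Fin n)) (δ : ℝ) (hδ : 0 ≤ δ)
    (hclose : ∀ k' : ℕ, ‖ξ k' - ξ' k'‖ ≤ δ) :
    ∀ k : ℕ, |Rob ξ φ k - Rob ξ' φ k| ≤ L * δ ∧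
      (Rob ξ φ k > L * δ → Sat ξ' φ k) := by
  intro k
  have hlip := rob_lip L φ hφ ξ ξ' δ hclose hL k
  refine ⟨hlip, fun hgt => ?_⟩
  have := abs_sub_le_iff.mp hlip
  exact (rob_sat ξ' φ k).1 (by linarith [this.1])
end
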